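/- Let G=(V,E) be a finite graph with thresholds t:V→ℕ satisfying 1 ≤ t(v) ≤ d_G(v) for all v, and let G'=(V',E') be the gadget graph of G. If S ⊆ V is a target set for G, then the incentive vector s on V' defined by s(u) = 1 if u = v'' for some v ∈ S and s(u) = 0 otherwise is a target vector for G' with cost C(s) = Σ_{u∈V'} s(u) = |S|. -/

import Mathlib

/-- Vertices of the gadget graph `G'` of `G`: for each `v ∈ V` the gadget `Λ_v` has
vertex set `{v', v'', v_1, …, v_{d_G(v)}}`, encoded as `Σ v : V, Fin (d_G(v) + 2)`,
where index `0` encodes `v'`, index `1` encodes `v''`, and indices `2, …, d_G(v)+1`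
encode the internal vertices `v_1, …, v_{d_G(v)}`. -/
abbrev GadgetVert {V : Type*} [Fintype V] (G : SimpleGraph V) [DecidableRel G.Adj] : Type _ :=
  Σ v : V, Fin (G.degree v + 2)

/-- Adjacency of the gadget graph: `u'` and `w'` are adjacent whenever `u` and `w` are
adjacent in `G`; inside each gadget `Λ_v`, the vertices `v'` and `v''` are joined by the
internally disjoint paths `(v', v_i, v'')`, `i = 1, …, d_G(v)`. -/
def gadgetAdj {V : Type*} [Fintype V] (G : SimpleGraph V) [DecidableRel G.Adj]
    (a b : GadgetVert G) : Prop :=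
  ((a.2 : ℕ) = 0 ∧ (b.2 : ℕ) = 0 ∧ G.Adj a.1 b.1) ∨
  (a.1 = b.1 ∧
    (((a.2 : ℕ) = 0 ∧ 2 ≤ (b.2 : ℕ)) ∨ (2 ≤ (a.2 : ℕ) ∧ (b.2 : ℕ) = 0) ∨
     ((a.2 : ℕ) = 1 ∧ 2 ≤ (b.2 : ℕ)) ∨ (2 ≤ (a.2 : ℕ) ∧ (b.2 : ℕ) = 1)))

instance gadgetAdj.decidable {V : Type*} [Fintype V] [DecidableEq V]
    (G : SimpleGraph V) [DecidableRel G.Adj] : DecidableRel (gadgetAdj G) := fun a b => by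
  unfold gadgetAdj; infer_instance

/-- The gadget graph `G'` of `G`. -/
def gadgetGraph {V : Type*} [Fintype V] (G : SimpleGraph V) [DecidableRel G.Adj] :
    SimpleGraph (GadgetVert G) where
  Adj := gadgetAdj G
  symm := by
    constructor
    rintro ⟨v, i⟩ ⟨u, j⟩ (⟨hi, hj, hadj⟩ | ⟨rfl, h⟩)
    · exact Or.inl ⟨hj, hi, hadj.symm⟩
    · exact Or.inr ⟨rfl, by tauto⟩
  loopless := by
    constructor
    rintro ⟨v, i⟩ (⟨_, _, hadj⟩ | ⟨_, h⟩)
    · exact G.loopless.irrefl v hadj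
    · omega

instance {V : Type*} [Fintype V] [DecidableEq V] (G : SimpleGraph V) [DecidableRel G.Adj] :
    DecidableRel (gadgetGraph G).Adj :=
  fun a b => inferInstanceAs (Decidable (gadgetAdj G a b))

/-- The thresholds on the gadget graph: `v'` keeps the threshold `t v` of `v`, every
other vertex of the gadget `Λ_v` has threshold `1`. -/
def gadgetThreshold {V : Type*} [Fintype V] (G : SimpleGraph V) [DecidableRel G.Adj]
    (t : V → ℕ) (a : GadgetVert G) : ℕ :=
  if (a.2 : ℕ) = 0 then t a.1 else 1

/-- `activeVec G t s ℓ` : the set of vertices active at round `ℓ` of the activation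
process in `G` with thresholds `t`, starting with partial incentives `s`. -/
def activeVec {V : Type*} [Fintype V] [DecidableEq V] (G : SimpleGraph V) [DecidableRel G.Adj]
    (t s : V → ℕ) : ℕ → Finset V
  | 0 => Finset.univ.filter fun v => t v ≤ s v
  | ℓ + 1 =>
    activeVec G t s ℓ ∪
      Finset.univ.filter fun u => t u - s u ≤ (G.neighborFinset u ∩ activeVec G t s ℓ).card

/-- `s` is a target vector for `G` with thresholds `t`. -/
def isTargetVec {V : Type*} [Fintype V] [DecidableEq V] (G : SimpleGraph V) [DecidableRel G.Adj]
    (t s : V → ℕ) : Prop :=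
  ∃ ℓ, activeVec G t s ℓ = Finset.univ

/-- `activeSet G t S ℓ` : the set of vertices active at round `ℓ` of the activation
process in `G` with thresholds `t`, starting at the seed set `S`. -/
def activeSet {V : Type*} [Fintype V] [DecidableEq V] (G : SimpleGraph V) [DecidableRel G.Adj]
    (t : V → ℕ) (S : Finset V) : ℕ → Finset V
  | 0 => S
  | ℓ + 1 =>
    activeSet G t S ℓ ∪
      Finset.univ.filter fun u => t u ≤ (G.neighborFinset u ∩ activeSet G t S ℓ).card

/-- `S` is a target set for `G` with thresholds `t`. -/
def isTargetSet {V : Type*} [Fintype V] [DecidableEq V] (G : SimpleGraph V) [DecidableRel G.Adj]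
    (t : V → ℕ) (S : Finset V) : Prop :=
  ∃ ℓ, activeSet G t S ℓ = Finset.univ


/-!
Each round of the activation process in `G` is simulated by one round in `G'` on the vertices
`v'`: if `v` is active at round `ℓ`, then `v'` is active at round `ℓ + 2`. For `v ∈ S` the
incentive activates `v''`, which activates the `d_G(v) ≥ t(v)` internal vertices of `Λ_v`, which in
turn activate `v'`. Conversely, once every `v'` is active, the internal vertices and then every
`v''` follow, since all of them have threshold `1` (here `d_G(v) ≥ 1` guarantees that `v''` has
a neighbour).
-/

section ActiveVec

variable {V : Type*} [Fintype V] [DecidableEq V] {G : SimpleGraph V} [DecidableRel G.Adj]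
  {t s : V → ℕ}

lemma activeVec_mono : Monotone (activeVec G t s) :=
  monotone_nat_of_le_succ fun ℓ => by rw [activeVec]; exact Finset.subset_union_left

lemma mem_activeVec_zero {u : V} (h : t u ≤ s u) : u ∈ activeVec G t s 0 := by
  simp [activeVec, h]

lemma mem_activeVec_succ_of_subset {u : V} {ℓ : ℕ} (T : Finset V)
    (hTadj : T ⊆ G.neighborFinset u) (hTact : T ⊆ activeVec G t s ℓ)
    (hT : t u - s u ≤ T.card) : u ∈ activeVec G t s (ℓ + 1) := by
  rw [activeVec]
  refine Finset.mem_union_right _ (Finset.mem_filter.mpr ⟨Finset.mem_univ _, ?_⟩)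
  exact hT.trans (Finset.card_le_card (Finset.subset_inter hTadj hTact))

lemma mem_activeVec_succ_of_adj {u w : V} {ℓ : ℕ} (hu : t u - s u ≤ 1) (hadj : G.Adj u w)
    (hw : w ∈ activeVec G t s ℓ) : u ∈ activeVec G t s (ℓ + 1) :=
  mem_activeVec_succ_of_subset {w} (by simpa using hadj) (by simpa using hw) (by simpa using hu)

end ActiveVec

namespace GadgetVert

variable {V : Type*} [Fintype V] (G : SimpleGraph V) [DecidableRel G.Adj]

def prime (v : V) : GadgetVert G := ⟨v, 0⟩

def dprime (v : V) : GadgetVert G := ⟨v, 1⟩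

def internal (v : V) (i : Fin (G.degree v)) : GadgetVert G := ⟨v, i.addNat 2⟩

lemma prime_injective : Function.Injective (prime G) :=
  fun _ _ h => congrArg Sigma.fst h

lemma internal_injective (v : V) : Function.Injective (internal G v) := by
  intro i j h
  simpa [internal, Fin.ext_iff] using h

lemma eq_prime_or_eq_dprime_or_eq_internal (a : GadgetVert G) :
    a = prime G a.1 ∨ a = dprime G a.1 ∨ ∃ i, a = internal G a.1 i := by
  obtain ⟨v, ⟨_ | _ | k, hk⟩⟩ := a
  · exact Or.inl rfl
  · exact Or.inr (Or.inl rfl)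
  · exact Or.inr (Or.inr ⟨⟨k, Nat.lt_of_add_lt_add_right hk⟩, rfl⟩)

end GadgetVert

open GadgetVert

section Gadget

variable {V : Type*} [Fintype V] {G : SimpleGraph V} [DecidableRel G.Adj]

lemma gadgetGraph_adj_prime {u v : V} (h : G.Adj u v) :
    (gadgetGraph G).Adj (prime G u) (prime G v) :=
  Or.inl ⟨rfl, rfl, h⟩

lemma gadgetGraph_adj_prime_internal (v : V) (i : Fin (G.degree v)) :
    (gadgetGraph G).Adj (prime G v) (internal G v i) :=
  Or.inr ⟨rfl, Or.inl ⟨rfl, by simp [internal]⟩⟩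

lemma gadgetGraph_adj_dprime_internal (v : V) (i : Fin (G.degree v)) :
    (gadgetGraph G).Adj (dprime G v) (internal G v i) :=
  Or.inr ⟨rfl, Or.inr (Or.inr (Or.inl ⟨rfl, by simp [internal]⟩))⟩

variable (t : V → ℕ)

@[simp] lemma gadgetThreshold_prime (v : V) : gadgetThreshold G t (prime G v) = t v := rfl

@[simp] lemma gadgetThreshold_dprime (v : V) : gadgetThreshold G t (dprime G v) = 1 := rfl

@[simp] lemma gadgetThreshold_internal (v : V) (i : Fin (G.degree v)) :
    gadgetThreshold G t (internal G v i) = 1 := by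
  simp [gadgetThreshold, internal]

end Gadget

section Incentive

variable {V : Type*} [Fintype V] [DecidableEq V] (G : SimpleGraph V) [DecidableRel G.Adj]
  (S : Finset V)

def gadgetIncentive (a : GadgetVert G) : ℕ :=
  if (a.2 : ℕ) = 1 ∧ a.1 ∈ S then 1 else 0

@[simp] lemma gadgetIncentive_prime (v : V) : gadgetIncentive G S (prime G v) = 0 := rfl

lemma gadgetIncentive_dprime {v : V} (hv : v ∈ S) : gadgetIncentive G S (dprime G v) = 1 := by
  simp [gadgetIncentive, dprime, hv]

lemma sum_gadgetIncentive : ∑ a, gadgetIncentive G S a = S.card := by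
  have hsupp : Finset.univ.filter (fun a : GadgetVert G => (a.2 : ℕ) = 1 ∧ a.1 ∈ S) =
      S.image (dprime G) := by
    ext ⟨v, j⟩
    simp only [Finset.mem_filter, Finset.mem_univ, true_and, Finset.mem_image, dprime,
      Sigma.mk.injEq]
    constructor
    · rintro ⟨hj, hv⟩
      exact ⟨v, hv, rfl, heq_of_eq (Fin.ext (by simpa using hj.symm))⟩
    · rintro ⟨_, hv, rfl, hj⟩
      exact ⟨by simp [← eq_of_heq hj], hv⟩
  simp only [gadgetIncentive, Finset.sum_boole, hsupp, Nat.cast_id]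
  exact Finset.card_image_of_injective S fun _ _ h => congrArg Sigma.fst h

end Incentive

section Simulation

variable {V : Type*} [Fintype V] [DecidableEq V] {G : SimpleGraph V} [DecidableRel G.Adj]
  {t : V → ℕ} {S : Finset V} {ℓ : ℕ}

local notation "A" => activeVec (gadgetGraph G) (gadgetThreshold G t) (gadgetIncentive G S)

lemma dprime_mem_activeVec_zero {v : V} (hv : v ∈ S) : dprime G v ∈ A 0 :=
  mem_activeVec_zero (by simp [gadgetIncentive_dprime G S hv])

lemma internal_mem_activeVec_succ_of_prime {v : V} (i : Fin (G.degree v))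
    (h : prime G v ∈ A ℓ) : internal G v i ∈ A (ℓ + 1) :=
  mem_activeVec_succ_of_adj (by simp) (gadgetGraph_adj_prime_internal v i).symm h

lemma internal_mem_activeVec_succ_of_dprime {v : V} (i : Fin (G.degree v))
    (h : dprime G v ∈ A ℓ) : internal G v i ∈ A (ℓ + 1) :=
  mem_activeVec_succ_of_adj (by simp) (gadgetGraph_adj_dprime_internal v i).symm h

lemma dprime_mem_activeVec_succ_of_internal {v : V} {i : Fin (G.degree v)}
    (h : internal G v i ∈ A ℓ) : dprime G v ∈ A (ℓ + 1) :=
  mem_activeVec_succ_of_adj (by simp) (gadgetGraph_adj_dprime_internal v i) h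

lemma prime_mem_activeVec_succ_of_internal {v : V} (htv : t v ≤ G.degree v)
    (h : ∀ i, internal G v i ∈ A ℓ) : prime G v ∈ A (ℓ + 1) := by
  refine mem_activeVec_succ_of_subset (Finset.univ.image (internal G v)) ?_ ?_ ?_
  · simpa [Finset.subset_iff] using gadgetGraph_adj_prime_internal v
  · simpa [Finset.subset_iff] using h
  · simpa [Finset.card_image_of_injective _ (internal_injective G v)] using htv

lemma prime_mem_activeVec_succ_of_neighbors {v : V} {T : Finset V}
    (hv : t v ≤ (G.neighborFinset v ∩ T).card) (hT : ∀ u ∈ T, prime G u ∈ A ℓ) :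
    prime G v ∈ A (ℓ + 1) := by
  refine mem_activeVec_succ_of_subset ((G.neighborFinset v ∩ T).image (prime G)) ?_ ?_ ?_
  · intro a ha
    obtain ⟨u, hu, rfl⟩ := Finset.mem_image.mp ha
    exact (SimpleGraph.mem_neighborFinset _ _ _).mpr
      (gadgetGraph_adj_prime ((G.mem_neighborFinset v u).mp (Finset.mem_inter.mp hu).1))
  · intro a ha
    obtain ⟨u, hu, rfl⟩ := Finset.mem_image.mp ha
    exact hT u (Finset.mem_inter.mp hu).2
  · simpa [Finset.card_image_of_injective _ (prime_injective G)] using hv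

lemma prime_mem_activeVec_of_mem_activeSet (ht : ∀ v, t v ≤ G.degree v) :
    ∀ {ℓ : ℕ} {v : V}, v ∈ activeSet G t S ℓ → prime G v ∈ A (ℓ + 2)
  | 0, v, hv =>
    prime_mem_activeVec_succ_of_internal (ht v) fun i =>
      internal_mem_activeVec_succ_of_dprime i (dprime_mem_activeVec_zero hv)
  | ℓ + 1, v, hv => by
    rw [activeSet, Finset.mem_union, Finset.mem_filter] at hv
    rcases hv with hv | ⟨-, hv⟩
    · exact activeVec_mono (Nat.le_succ _) (prime_mem_activeVec_of_mem_activeSet ht hv)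
    · exact prime_mem_activeVec_succ_of_neighbors hv
        fun u hu => prime_mem_activeVec_of_mem_activeSet ht hu

lemma isTargetVec_gadgetIncentive (ht : ∀ v, 1 ≤ t v ∧ t v ≤ G.degree v)
    (hS : isTargetSet G t S) :
    isTargetVec (gadgetGraph G) (gadgetThreshold G t) (gadgetIncentive G S) := by
  obtain ⟨L, hL⟩ := hS
  have hprime (v : V) : prime G v ∈ A (L + 2) :=
    prime_mem_activeVec_of_mem_activeSet (fun v => (ht v).2) (hL ▸ Finset.mem_univ v)
  refine ⟨L + 4, Finset.eq_univ_of_forall fun a => ?_⟩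
  rcases eq_prime_or_eq_dprime_or_eq_internal G a with ha | ha | ⟨i, ha⟩ <;> rw [ha]
  · exact activeVec_mono (by omega) (hprime a.1)
  · have hdeg : 0 < G.degree a.1 := (ht a.1).1.trans (ht a.1).2
    exact dprime_mem_activeVec_succ_of_internal (i := ⟨0, hdeg⟩)
      (internal_mem_activeVec_succ_of_prime _ (hprime a.1))
  · exact activeVec_mono (by omega) (internal_mem_activeVec_succ_of_prime i (hprime a.1))

end Simulation

/-- If `S` is a target set for `G`, then the incentive vector on the gadget graph `G'`
assigning `1` to the vertex `v''` of each gadget `Λ_v` with `v ∈ S` and `0` to all other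
vertices is a target vector for `G'`, of cost `|S|`. -/
theorem target_set_to_gadget_target_vector {V : Type*} [Fintype V] [DecidableEq V]
    (G : SimpleGraph V) [DecidableRel G.Adj] (t : V → ℕ)
    (ht : ∀ v, 1 ≤ t v ∧ t v ≤ G.degree v)
    (S : Finset V) (hS : isTargetSet G t S) :
    isTargetVec (gadgetGraph G) (gadgetThreshold G t)
      (fun a => if (a.2 : ℕ) = 1 ∧ a.1 ∈ S then 1 else 0) ∧
    (∑ a : GadgetVert G, (if (a.2 : ℕ) = 1 ∧ a.1 ∈ S then 1 else 0)) = S.card :=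
  ⟨isTargetVec_gadgetIncentive ht hS, sum_gadgetIncentive G S⟩
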